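/- Let $g(x) = -\log(1 + e^{-x})$, $f(x) = (e^x+1)^{-2}$, $\sigma \equiv 1$, $b \equiv \mu$. Then the function $G(x) = \frac{1}{f(x)}(\tfrac{1}{2} g''(x) + \mu g'(x))$ satisfies, for all $z < 0$, $G(g^{-1}(z)) = \mu + \left(\mu - \tfrac{1}{2}\right)\frac{e^z}{1 - e^z}$. -/

import Mathlib

/-!
Since `-log (1 + exp (-x)) = log (sigmoid x)`, the derivatives of `g` are those of the logistic
function: `g' = 1 - sigmoid` and `g'' = -sigmoid * (1 - sigmoid)`. With `1 - sigmoid x = (exp x + 1)⁻¹`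
this gives `G x = μ + (μ - 1/2) exp x`, and `exp x = s / (1 - s)` for `s = sigmoid x = exp (g x)`.
-/

open Real

namespace Real

lemma log_sigmoid (x : ℝ) : log (sigmoid x) = -log (1 + exp (-x)) := by
  rw [sigmoid_def, log_inv]

lemma one_sub_sigmoid (x : ℝ) : 1 - sigmoid x = (exp x + 1)⁻¹ := by
  rw [← sigmoid_neg, sigmoid_def, neg_neg, add_comm]

lemma sigmoid_div_one_sub_sigmoid (x : ℝ) : sigmoid x / (1 - sigmoid x) = exp x := by
  rw [← sigmoid_neg, ← sigmoid_mul_rexp_neg, exp_neg]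
  field_simp [(sigmoid_pos x).ne', (exp_pos x).ne']

lemma hasDerivAt_log_sigmoid (x : ℝ) :
    HasDerivAt (fun x => log (sigmoid x)) (1 - sigmoid x) x := by
  convert (hasDerivAt_sigmoid x).log (sigmoid_pos x).ne' using 1
  field_simp [(sigmoid_pos x).ne']

lemma deriv_log_sigmoid : deriv (fun x => log (sigmoid x)) = fun x => 1 - sigmoid x :=
  funext fun x => (hasDerivAt_log_sigmoid x).deriv

lemma deriv_deriv_log_sigmoid :
    deriv (deriv fun x => log (sigmoid x)) = fun x => -(sigmoid x * (1 - sigmoid x)) := by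
  rw [deriv_log_sigmoid]
  exact funext fun x => ((hasDerivAt_sigmoid x).const_sub 1).deriv

end Real

lemma log_sigmoid_drift (μ x : ℝ) :
    (1 / (1 / (exp x + 1) ^ 2)) *
        ((1/2) * deriv (deriv fun x => log (sigmoid x)) x + μ * deriv (fun x => log (sigmoid x)) x)
      = μ + (μ - 1/2) * (sigmoid x / (1 - sigmoid x)) := by
  have hsigmoid : sigmoid x = 1 - (exp x + 1)⁻¹ := by rw [← one_sub_sigmoid, sub_sub_cancel]
  rw [deriv_deriv_log_sigmoid, deriv_log_sigmoid]
  beta_reduce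
  rw [sigmoid_div_one_sub_sigmoid, hsigmoid]
  field_simp
  ring

theorem stmt_6_general (μ : ℝ) (g ginv G : ℝ → ℝ)
    (hg : g = fun x => -Real.log (1 + Real.exp (-x)))
    (hginv : ∀ z < (0:ℝ), g (ginv z) = z)
    (hG : G = fun x => (1 / (1 / (Real.exp x + 1) ^ 2)) *
      ((1/2) * deriv (deriv g) x + μ * deriv g x)) :
    ∀ z < (0:ℝ),
      G (ginv z) = μ + (μ - 1/2) * (Real.exp z / (1 - Real.exp z)) := by
  intro z hz
  have hg_log : g = fun x => log (sigmoid x) := by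
    simp only [hg, log_sigmoid]
  have hsigmoid : sigmoid (ginv z) = exp z := by
    rw [← exp_log (sigmoid_pos _), ← congrFun hg_log, hginv z hz]
  simp only [hG, hg_log, log_sigmoid_drift, hsigmoid]

/-- With `g x = -log (1 + exp (-x))`, `f x = (exp x + 1)⁻²`, `σ ≡ 1`, `b ≡ μ`,
the drift `G x = (1/f x) * ((1/2) g'' x + μ g' x)` satisfies
`G (g⁻¹ z) = μ + (μ - 1/2) * exp z / (1 - exp z)` for `z < 0`. -/
theorem stmt_6 (μ : ℝ) (g ginv G : ℝ → ℝ)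
    (hg : g = fun x => -Real.log (1 + Real.exp (-x)))
    (hginv : ∀ z < (0:ℝ), g (ginv z) = z)
    (hginv' : ∀ x : ℝ, ginv (g x) = x)
    (hG : G = fun x => (1 / (1 / (Real.exp x + 1) ^ 2)) *
      ((1/2) * deriv (deriv g) x + μ * deriv g x)) :
    ∀ z < (0:ℝ),
      G (ginv z) = μ + (μ - 1/2) * (Real.exp z / (1 - Real.exp z)) :=
  stmt_6_general μ g ginv G hg hginv hG
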